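/- arXiv:1302.2046 — 2 statements merged into one kernel-verified Lean document; each statement's English description precedes it below -/
import Mathlib

section
/- Let A be a torsion-free K[t^{±1}]-algebra, R = A[x; σ, Δ] an Ore extension such that R/(t−1)R is commutative. Then R/(t−1)R is the Poisson-Ore extension A̅[X; α, δ]_P where A̅ = A/(t−1)A, X = x̄, α(ā) = ((σ(a)−a)/(t−1))|_{t=1} and δ(ā) = (Δ(a)/(t−1))|_{t=1}; in particular σ(a) − a ∈ (t−1)A and Δ(a) ∈ (t−1)A for all a ∈ A, α is a Poisson derivation of A̅ and δ is a Poisson α-derivation. -/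
open LaurentPolynomial

/-- A Poisson bracket on a commutative `K`-algebra `S`. -/
structure PoissonStructure (K S : Type*) [CommRing K] [CommRing S] [Algebra K S] where
  br : S → S → S
  add_left : ∀ a b c : S, br (a + b) c = br a c + br b c
  smul_left : ∀ (k : K) (a b : S), br (k • a) b = k • br a b
  skew : ∀ a b : S, br a b = - br b a
  leibniz : ∀ a b c : S, br a (b * c) = br a b * c + b * br a c
  jacobi : ∀ a b c : S, br a (br b c) + br b (br c a) + br c (br a b) = 0

/-! Since `S` is commutative, `x a − a x = Δ(a) + (σ(a) − a) x` vanishes modulo `t − 1`, and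
freeness of the basis `(xⁿ)` puts both coefficients in `(t − 1)A`. As `t − 1` is central and
regular, the σ-derivations `σ − id` and `Δ` divide uniquely by `t − 1`, and the quotients descend
to `Ā` because both maps commute with multiplication by `t − 1`. Every identity for `α` and `δ`
is the corresponding identity for `σ − id` and `Δ` divided by `t − 1`; for the Poisson identity
one applies the σ-derivation to `ab − ba = (t − 1)e`, whose reduction is `{ā, b̄} = ē`. The map `α`
is the case `Δ = σ − id`, where the correction term `α(ā)α(b̄) − α(ā)α(b̄)` vanishes. -/

theorem LaurentPolynomial.T_one_sub_one_ne_zero {K : Type*} [CommRing K] [Nontrivial K] :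
    (T 1 - 1 : K[T;T⁻¹]) ≠ 0 := by
  simpa using Polynomial.toLaurent_ne_zero.mpr (Polynomial.X_sub_C_ne_zero (1 : K))

theorem isLeftRegular_algebraMap_of_smul_eq_zero {L A : Type*} [CommSemiring L] [Ring A]
    [Algebra L A] (htf : ∀ (l : L) (a : A), l • a = 0 → l = 0 ∨ a = 0) {l : L} (hl : l ≠ 0) :
    IsLeftRegular (algebraMap L A l) :=
  isLeftRegular_of_non_zero_divisor _ fun a ha =>
    (htf l a (by rwa [Algebra.smul_def])).resolve_left hl

section DivReduction

variable {A S : Type*} [Ring A] [CommRing S] {p : A →+* S} {c : A}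

/-- The paper's `(φ/(t−1))|_{t=1}` on `Ā`, with `c = t − 1` and `p` the reduction map. -/
def IsDivReduction (p : A →+* S) (c : A) (φ : A → A) (ψ : S → S) : Prop :=
  ∀ a b, φ a = c * b → ψ (p a) = p b

def IsSigmaDerivation (σ : A →+* A) (φ : A →+ A) : Prop :=
  ∀ a b, φ (a * b) = σ a * φ b + φ a * b

theorem isSigmaDerivation_sub_id (σ : A →+* A) :
    IsSigmaDerivation σ (σ.toAddMonoidHom - AddMonoidHom.id A) := by
  intro a b
  show σ (a * b) - a * b = σ a * (σ b - b) + (σ a - a) * b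
  rw [map_mul]
  noncomm_ring

theorem dvd_mul_sub_mul_of_ker (hker : ∀ u, p u = 0 ↔ c ∣ u) (a b : A) : c ∣ a * b - b * a :=
  (hker _).mp (by rw [map_sub, map_mul, map_mul, mul_comm, sub_self])

theorem exists_isDivReduction (hc : IsLeftRegular c) (hker : ∀ u, p u = 0 ↔ c ∣ u)
    (φ : A →+ A) (hφc : ∀ a, φ (c * a) = c * φ a) (hdiv : ∀ a, c ∣ φ a) :
    ∃ ψ : S → S, IsDivReduction p c φ ψ := by
  choose q hq using hdiv
  have hfactors : Function.FactorsThrough (p ∘ q) p := by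
    intro a a' he
    obtain ⟨d, hd⟩ := (hker (a - a')).mp (by rw [map_sub, he, sub_self])
    have hqd : q a - q a' = c * q d := hc <| show c * _ = c * _ by
      rw [mul_sub, ← hq, ← hq, ← map_sub, hd, hφc, hq]
    simpa [sub_eq_zero] using (hker (q a - q a')).mpr ⟨_, hqd⟩
  refine ⟨Function.extend p (p ∘ q) 0, fun a b hb => ?_⟩
  rw [hfactors.extend_apply, Function.comp_apply, hc ((hq a).symm.trans hb)]

variable {φ : A →+ A} {ψ : S → S}

theorem IsDivReduction.map_add (hψ : IsDivReduction p c φ ψ) (hdiv : ∀ a, c ∣ φ a) (a b : A) :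
    ψ (p (a + b)) = ψ (p a) + ψ (p b) := by
  obtain ⟨u, hu⟩ := hdiv a
  obtain ⟨v, hv⟩ := hdiv b
  rw [hψ a u hu, hψ b v hv, hψ _ (u + v) (by rw [_root_.map_add, hu, hv, mul_add]),
    _root_.map_add]

theorem IsDivReduction.map_mul {σ : A →+* A} (hψ : IsDivReduction p c φ ψ)
    (hφ : IsSigmaDerivation σ φ) (hdiv : ∀ a, c ∣ φ a) (hcen : ∀ a, Commute c a)
    (hσ : ∀ a, p (σ a) = p a) (a b : A) :
    ψ (p (a * b)) = ψ (p a) * p b + p a * ψ (p b) := by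
  obtain ⟨u, hu⟩ := hdiv a
  obtain ⟨v, hv⟩ := hdiv b
  have hab : φ (a * b) = c * (σ a * v + u * b) := by
    rw [hφ, hu, hv, mul_add, ← mul_assoc, ← (hcen _).eq, mul_assoc, mul_assoc]
  rw [hψ a u hu, hψ b v hv, hψ _ _ hab, _root_.map_add, _root_.map_mul, _root_.map_mul, hσ]
  ring

theorem IsDivReduction.map_bracket {σ : A →+* A} {α : S → S} (hψ : IsDivReduction p c φ ψ)
    (hα : IsDivReduction p c (fun a => σ a - a) α) (hφ : IsSigmaDerivation σ φ)
    (hφc : ∀ a, φ (c * a) = c * φ a) (hdiv : ∀ a, c ∣ φ a) (hσdiv : ∀ a, c ∣ σ a - a)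
    (hc : IsLeftRegular c) (hcen : ∀ a, Commute c a) (hker : ∀ u, p u = 0 ↔ c ∣ u)
    (br : S → S → S) (hbr : ∀ a b e, a * b - b * a = c * e → br (p a) (p b) = p e) (a b : A) :
    ψ (br (p a) (p b))
      = br (ψ (p a)) (p b) + br (p a) (ψ (p b)) + α (p a) * ψ (p b) - ψ (p a) * α (p b) := by
  obtain ⟨u, hu⟩ := hdiv a
  obtain ⟨v, hv⟩ := hdiv b
  obtain ⟨s, hs⟩ := hσdiv a
  obtain ⟨t, ht⟩ := hσdiv b
  obtain ⟨e, he⟩ := dvd_mul_sub_mul_of_ker hker a b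
  obtain ⟨e₁, he₁⟩ := dvd_mul_sub_mul_of_ker hker u b
  obtain ⟨e₂, he₂⟩ := dvd_mul_sub_mul_of_ker hker a v
  have hσa : σ a = a + c * s := by rw [← hs, add_sub_cancel]
  have hσb : σ b = b + c * t := by rw [← ht, add_sub_cancel]
  have hφe : φ e = c * (e₁ + e₂ + (s * v - t * u)) := hc <| show c * _ = c * _ by
    rw [← hφc, ← he, map_sub, hφ, hφ, hσa, hσb, hu, hv]
    simp only [mul_add, add_mul, mul_sub, ← he₁, ← he₂, mul_assoc, (hcen _).left_comm]
    noncomm_ring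
  rw [hbr a b e he, hψ e _ hφe, hψ a u hu, hψ b v hv, hα a s hs, hα b t ht, hbr u b e₁ he₁,
    hbr a v e₂ he₂]
  simp only [_root_.map_add, map_sub, _root_.map_mul]
  ring

end DivReduction

section OreExtension

variable {A R S : Type*} [Ring A] [Ring R] [CommRing S] {ι : A →+* R} {x : R} {π : R →+* S}
  {c : A}

theorem coeff_eq_mul_of_sum_eq_mul
    (hfree : ∀ f : ℕ →₀ A, (f.sum fun n a => ι a * x ^ n) = 0 → f = 0) {f g : ℕ →₀ A}
    (h : (f.sum fun n a => ι a * x ^ n) = ι c * g.sum fun n a => ι a * x ^ n) (n : ℕ) :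
    f n = c * g n := by
  have hcg : (ι c * g.sum fun n a => ι a * x ^ n)
      = (g.mapRange (c * ·) (mul_zero c)).sum fun n a => ι a * x ^ n := by
    rw [Finsupp.mul_sum, Finsupp.sum_mapRange_index fun n => by rw [map_zero, zero_mul]]
    exact Finsupp.sum_congr fun n _ => by rw [← mul_assoc, ← map_mul]
  have hzero := hfree (f - g.mapRange (c * ·) (mul_zero c)) <| by
    rw [Finsupp.sum_sub_index fun n a b => by rw [map_sub, sub_mul], ← hcg, h, sub_self]
  rw [sub_eq_zero.mp hzero, Finsupp.mapRange_apply]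

theorem map_finsuppSum_mul_pow (f : ℕ →₀ A) :
    π (f.sum fun n a => ι a * x ^ n) = f.sum fun n a => π (ι a) * π x ^ n := by
  simp only [map_finsuppSum, map_mul, map_pow]

theorem dvd_coeff_of_map_sum_eq_zero
    (hbasis : ∀ r : R, ∃ f : ℕ →₀ A, r = f.sum fun n a => ι a * x ^ n)
    (hfree : ∀ f : ℕ →₀ A, (f.sum fun n a => ι a * x ^ n) = 0 → f = 0)
    (hker : ∀ r : R, π r = 0 ↔ ι c ∣ r) {f : ℕ →₀ A}
    (h : π (f.sum fun n a => ι a * x ^ n) = 0) (n : ℕ) : c ∣ f n := by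
  obtain ⟨y, hy⟩ := (hker _).mp h
  obtain ⟨g, rfl⟩ := hbasis y
  exact ⟨g n, coeff_eq_mul_of_sum_eq_mul hfree hy n⟩

theorem dvd_of_map_add_mul_eq_zero
    (hbasis : ∀ r : R, ∃ f : ℕ →₀ A, r = f.sum fun n a => ι a * x ^ n)
    (hfree : ∀ f : ℕ →₀ A, (f.sum fun n a => ι a * x ^ n) = 0 → f = 0)
    (hker : ∀ r : R, π r = 0 ↔ ι c ∣ r) {a₀ a₁ : A} (h : π (ι a₀ + ι a₁ * x) = 0) :
    c ∣ a₀ ∧ c ∣ a₁ := by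
  have hsum : ((Finsupp.single 0 a₀ + Finsupp.single 1 a₁).sum fun n a => ι a * x ^ n)
      = ι a₀ + ι a₁ * x := by
    rw [Finsupp.sum_add_index' (fun n => by rw [map_zero, zero_mul])
        (fun n b₁ b₂ => by rw [map_add, add_mul]),
      Finsupp.sum_single_index (by rw [map_zero, zero_mul]),
      Finsupp.sum_single_index (by rw [map_zero, zero_mul]), pow_zero, mul_one, pow_one]
  have hdvd := dvd_coeff_of_map_sum_eq_zero hbasis hfree hker (hsum ▸ h)
  simpa using And.intro (hdvd 0) (hdvd 1)

theorem map_eq_zero_iff_dvd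
    (hbasis : ∀ r : R, ∃ f : ℕ →₀ A, r = f.sum fun n a => ι a * x ^ n)
    (hfree : ∀ f : ℕ →₀ A, (f.sum fun n a => ι a * x ^ n) = 0 → f = 0)
    (hker : ∀ r : R, π r = 0 ↔ ι c ∣ r) (a : A) : π (ι a) = 0 ↔ c ∣ a := by
  refine ⟨fun h => (dvd_of_map_add_mul_eq_zero hbasis hfree hker (a₁ := 0) ?_).1, ?_⟩
  · rwa [map_zero, zero_mul, add_zero]
  · rintro ⟨b, rfl⟩
    exact (hker _).mpr ⟨ι b, map_mul ι c b⟩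

theorem dvd_sub_self_and_dvd_of_ore {σ Δ : A → A}
    (hore : ∀ a : A, x * ι a = ι (σ a) * x + ι (Δ a))
    (hbasis : ∀ r : R, ∃ f : ℕ →₀ A, r = f.sum fun n a => ι a * x ^ n)
    (hfree : ∀ f : ℕ →₀ A, (f.sum fun n a => ι a * x ^ n) = 0 → f = 0)
    (hker : ∀ r : R, π r = 0 ↔ ι c ∣ r) (a : A) : c ∣ σ a - a ∧ c ∣ Δ a := by
  have hcomm : x * ι a - ι a * x = ι (Δ a) + ι (σ a - a) * x := by
    rw [hore, map_sub, sub_mul]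
    abel
  refine (dvd_of_map_add_mul_eq_zero hbasis hfree hker ?_).symm
  rw [← hcomm, map_sub, map_mul, map_mul, mul_comm, sub_self]

theorem br_gen_eq_mul_add {σ Δ : A → A} {α δ : S → S} (br : S → S → S)
    (hbr : ∀ r s z : R, r * s - s * r = ι c * z → br (π r) (π s) = π z)
    (hore : ∀ a : A, x * ι a = ι (σ a) * x + ι (Δ a))
    (hα : IsDivReduction (π.comp ι) c (fun a => σ a - a) α)
    (hδ : IsDivReduction (π.comp ι) c Δ δ) (hσdiv : ∀ a, c ∣ σ a - a) (hΔdiv : ∀ a, c ∣ Δ a)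
    (a : A) : br (π x) (π (ι a)) = α (π (ι a)) * π x + δ (π (ι a)) := by
  obtain ⟨s, hs⟩ := hσdiv a
  obtain ⟨d, hd⟩ := hΔdiv a
  have hcomm : x * ι a - ι a * x = ι c * (ι s * x + ι d) := by
    rw [hore, mul_add, ← mul_assoc, ← map_mul, ← map_mul, ← hs, ← hd, map_sub, sub_mul]
    abel
  rw [hbr _ _ _ hcomm, map_add, map_mul]
  rw [show π (ι a) = π.comp ι a from rfl, hα a s hs, hδ a d hd]
  rfl

end OreExtension

/-- Semiclassical limit of an Ore extension: let `A` be a torsion-free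
`K[t^{±1}]`-algebra and `R = A[x; σ, Δ]` an Ore extension (modelled by a ring `R`
containing `A` via `ι`, with `x·ι(a) = ι(σa)·x + ι(Δa)` and `R` free with basis
`(xⁿ)` over `A`), such that `S = R/(t−1)R` is commutative, with semiclassical
Poisson bracket `Q`. Then `σ(a) − a ∈ (t−1)A` and `Δ(a) ∈ (t−1)A` for all `a`, and
`S` is the Poisson–Ore extension `Ā[X; α, δ]_P` where `α = ((σ−id)/(t−1))|_{t=1}`
is a Poisson derivation of `Ā = A/(t−1)A` and `δ = (Δ/(t−1))|_{t=1}` is a Poisson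
`α`-derivation. -/
theorem stmt17 {K A R S : Type*} [Field K] [Ring A]
    [Algebra (LaurentPolynomial K) A] [Ring R] [CommRing S] [Algebra K S]
    -- `A` is torsion-free over `K[t^{±1}]`
    (htf : ∀ (l : LaurentPolynomial K) (a : A), l • a = 0 → l = 0 ∨ a = 0)
    -- the Ore extension data
    (σ : A ≃+* A) (hσl : ∀ (l : LaurentPolynomial K) (a : A), σ (l • a) = l • σ a)
    (Δ : A → A) (hΔadd : ∀ a b : A, Δ (a + b) = Δ a + Δ b)
    (hΔl : ∀ (l : LaurentPolynomial K) (a : A), Δ (l • a) = l • Δ a)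
    (hΔder : ∀ a b : A, Δ (a * b) = σ a * Δ b + Δ a * b)
    (ι : A →+* R) (x : R)
    (hore : ∀ a : A, x * ι a = ι (σ a) * x + ι (Δ a))
    (hbasis : ∀ rr : R, ∃ f : ℕ →₀ A, rr = f.sum fun n a => ι a * x ^ n)
    (hfree : ∀ f : ℕ →₀ A, (f.sum fun n a => ι a * x ^ n) = 0 → f = 0)
    -- the element `t − 1` of `A`
    (cA : A) (hcA : cA = algebraMap (LaurentPolynomial K) A (T 1 - 1))
    -- the quotient `S = R/(t−1)R`, which is commutative
    (π : R →+* S) (hsurj : Function.Surjective π)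
    (hker : ∀ rr : R, π rr = 0 ↔ ∃ y : R, rr = ι cA * y)
    -- the semiclassical limit Poisson bracket on `S`
    (Q : PoissonStructure K S)
    (hQ : ∀ r s : R, ∀ z : R, r * s - s * r = ι cA * z → Q.br (π r) (π s) = π z) :
    -- (σ − id)(A) ⊆ (t−1)A and Δ(A) ⊆ (t−1)A:
    (∀ a : A, (∃ b : A, σ a - a = cA * b) ∧ (∃ b : A, Δ a = cA * b)) ∧
    -- the induced maps `α` and `δ` make `S = Ā[X; α, δ]_P`:
    ∃ α δ : S → S,
      (∀ a b : A, σ a - a = cA * b → α (π (ι a)) = π (ι b)) ∧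
      (∀ a b : A, Δ a = cA * b → δ (π (ι a)) = π (ι b)) ∧
      -- `{X, ā} = α(ā) X + δ(ā)`:
      (∀ a : A, Q.br (π x) (π (ι a)) = α (π (ι a)) * π x + δ (π (ι a))) ∧
      -- `α` is a Poisson derivation of `Ā`:
      (∀ a b : A, α (π (ι (a + b))) = α (π (ι a)) + α (π (ι b))) ∧
      (∀ a b : A, α (π (ι (a * b))) = α (π (ι a)) * π (ι b) + π (ι a) * α (π (ι b))) ∧
      (∀ a b : A, α (Q.br (π (ι a)) (π (ι b)))
        = Q.br (α (π (ι a))) (π (ι b)) + Q.br (π (ι a)) (α (π (ι b)))) ∧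
      -- `δ` is a Poisson `α`-derivation of `Ā`:
      (∀ a b : A, δ (π (ι (a + b))) = δ (π (ι a)) + δ (π (ι b))) ∧
      (∀ a b : A, δ (π (ι (a * b))) = δ (π (ι a)) * π (ι b) + π (ι a) * δ (π (ι b))) ∧
      (∀ a b : A, δ (Q.br (π (ι a)) (π (ι b)))
        = Q.br (δ (π (ι a))) (π (ι b)) + Q.br (π (ι a)) (δ (π (ι b)))
          + α (π (ι a)) * δ (π (ι b)) - δ (π (ι a)) * α (π (ι b))) ∧
      -- `S` is the polynomial ring `Ā[X]` with `X = π x`: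
      (∀ s : S, ∃ f : ℕ →₀ A, s = f.sum fun n a => π (ι a) * (π x) ^ n) ∧
      (∀ f : ℕ →₀ A, (f.sum fun n a => π (ι a) * (π x) ^ n) = 0 →
        ∀ n : ℕ, π (ι (f n)) = 0) := by
  have hc : IsLeftRegular cA :=
    hcA ▸ isLeftRegular_algebraMap_of_smul_eq_zero htf T_one_sub_one_ne_zero
  have hcen : ∀ a, Commute cA a := fun a => hcA ▸ Algebra.commute_algebraMap_left _ a
  have hcsmul : ∀ a, cA * a = (T 1 - 1 : LaurentPolynomial K) • a := fun a => by
    rw [hcA, Algebra.smul_def]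
  have hkerA : ∀ a, π.comp ι a = 0 ↔ cA ∣ a := map_eq_zero_iff_dvd hbasis hfree hker
  have hdiv := dvd_sub_self_and_dvd_of_ore hore hbasis hfree hker
  have hσdiv : ∀ a, cA ∣ σ a - a := fun a => (hdiv a).1
  have hΔdiv : ∀ a, cA ∣ Δ a := fun a => (hdiv a).2
  have hσ : ∀ a, π.comp ι (σ a) = π.comp ι a := fun a =>
    sub_eq_zero.mp <| by rw [← map_sub]; exact (hkerA _).mpr (hσdiv a)
  have hbr : ∀ a b e, a * b - b * a = cA * e → Q.br (π.comp ι a) (π.comp ι b) = π.comp ι e :=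
    fun a b e h => hQ _ _ _ (by simp only [← map_mul, ← map_sub, h])
  let σ' : A →+ A := (σ : A →+* A).toAddMonoidHom - AddMonoidHom.id A
  let Δ' : A →+ A := AddMonoidHom.mk' Δ hΔadd
  have hσ'c : ∀ a, σ' (cA * a) = cA * σ' a := fun a => by
    show σ (cA * a) - cA * a = cA * (σ a - a)
    rw [hcsmul, hσl, ← hcsmul, ← hcsmul, mul_sub]
  have hΔ'c : ∀ a, Δ' (cA * a) = cA * Δ' a := fun a => by
    show Δ (cA * a) = cA * Δ a
    rw [hcsmul, hΔl, hcsmul]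
  have hσ' : IsSigmaDerivation (σ : A →+* A) σ' := isSigmaDerivation_sub_id _
  have hΔ' : IsSigmaDerivation (σ : A →+* A) Δ' := hΔder
  obtain ⟨α, hα⟩ := exists_isDivReduction hc hkerA σ' hσ'c hσdiv
  obtain ⟨δ, hδ⟩ := exists_isDivReduction hc hkerA Δ' hΔ'c hΔdiv
  refine ⟨hdiv, α, δ, hα, hδ, br_gen_eq_mul_add Q.br hQ hore hα hδ hσdiv hΔdiv,
    hα.map_add hσdiv, hα.map_mul hσ' hσdiv hcen hσ, fun a b => ?_,
    hδ.map_add hΔdiv, hδ.map_mul hΔ' hΔdiv hcen hσ,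
    hδ.map_bracket hα hΔ' hΔ'c hΔdiv hσdiv hc hcen hkerA Q.br hbr,
    fun s => ?_, fun f hf n => ?_⟩
  · have h := hα.map_bracket hα hσ' hσ'c hσdiv hσdiv hc hcen hkerA Q.br hbr a b
    rwa [mul_comm (α _), add_sub_cancel_right] at h
  · obtain ⟨r, rfl⟩ := hsurj s
    obtain ⟨f, rfl⟩ := hbasis r
    exact ⟨f, map_finsuppSum_mul_pow f⟩
  · rw [← map_finsuppSum_mul_pow] at hf
    exact (hkerA _).mpr (dvd_coeff_of_map_sum_eq_zero hbasis hfree hker hf n)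
end

section
/- Let A be a torsion-free K[t^{±1}]-algebra with Ore extension R = A[x;σ,Δ] such that R/(t−1)R is commutative, and suppose Δσ = t^η σΔ for an integer η whose image in K is nonzero, and Δ^i(A) ⊆ (t−1)^i (i)!_{t^η} A for all i ≥ 0. Then the maps D_i(ā) = (Δ^i(a)/((t−1)^i (i)!_{t^η}))|_{t=1} form an iterative higher (η,α)-skew Poisson derivation on A̅ = A/(t−1)A extending δ, which is locally nilpotent whenever Δ is locally nilpotent. -/
/-!
Since `Δ` is a `σ`-derivation with `Δσ = q σΔ`, `q = t^η`, its powers obey a `q`-Leibniz rule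
with Gaussian binomial coefficients, and `[n, i]_q (i)!_q (n-i)!_q = (n)!_q`; so after dividing
by `(t-1)ⁿ (n)!_q` the rule has no coefficients left, and reducing at `t = 1`, where `σ = id`,
gives the higher Leibniz rule. Axioms (A2) and (A3) come from the first-order terms of
`ab - ba ≡ (t-1){a, b}`, `σⁱ ≡ 1 + i (t-1) α` and `t^{iη} ≡ 1 + iη (t-1)` modulo `(t-1)²`, and
iterativity from `[i+j, i]_q ≡ C(i+j, i)` modulo `t - 1`. Torsion-freeness makes every division
by `t - 1` unique, hence the `Dᵢ` well defined.
-/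

open LaurentPolynomial

/-- The `q`-factorial `(i)!_q = (i)_q (i−1)_q ⋯ (1)_q` at `q = t^η`,
where `(k)_q = 1 + q + ⋯ + q^{k−1}`. -/
noncomputable def qfact (K : Type*) [Field K] (η : ℤ) (i : ℕ) : LaurentPolynomial K :=
  ∏ k ∈ Finset.range i, ∑ l ∈ Finset.range (k + 1), (T η : LaurentPolynomial K) ^ l

open Finset

section QAnalogue

variable {R : Type*} [CommRing R] (q : R)

def qNum (k : ℕ) : R := ∑ l ∈ range k, q ^ l

def qFactorial (n : ℕ) : R := ∏ k ∈ range n, qNum q (k + 1)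

def qChoose : ℕ → ℕ → R
  | _, 0 => 1
  | 0, _ + 1 => 0
  | n + 1, i + 1 => qChoose n i + q ^ (i + 1) * qChoose n (i + 1)

@[simp] lemma qNum_zero : qNum q 0 = 0 := sum_range_zero _

lemma qNum_add (a b : ℕ) : qNum q (a + b) = qNum q a + q ^ a * qNum q b := by
  simp only [qNum, sum_range_add, pow_add, mul_sum]

@[simp] lemma qFactorial_zero : qFactorial q 0 = 1 := prod_range_zero _

lemma qFactorial_succ (n : ℕ) : qFactorial q (n + 1) = qFactorial q n * qNum q (n + 1) :=
  prod_range_succ _ _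

@[simp] lemma qFactorial_one : qFactorial q 1 = 1 := by simp [qFactorial, qNum]

@[simp] lemma qChoose_zero_right (n : ℕ) : qChoose q n 0 = 1 := by cases n <;> rfl

lemma qChoose_succ_succ (n i : ℕ) :
    qChoose q (n + 1) (i + 1) = qChoose q n i + q ^ (i + 1) * qChoose q n (i + 1) := rfl

lemma qChoose_eq_zero_of_lt {n i : ℕ} (h : n < i) : qChoose q n i = 0 := by
  induction n generalizing i with
  | zero => obtain ⟨i, rfl⟩ := Nat.exists_eq_succ_of_ne_zero h.ne'; rfl
  | succ n ih =>
    obtain ⟨i, rfl⟩ := Nat.exists_eq_succ_of_ne_zero (by omega : i ≠ 0)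
    rw [qChoose_succ_succ, ih (by omega), ih (by omega), mul_zero, add_zero]

lemma qChoose_mul_qFactorial_mul_qFactorial {n i : ℕ} (h : i ≤ n) :
    qChoose q n i * qFactorial q i * qFactorial q (n - i) = qFactorial q n := by
  induction n generalizing i with
  | zero => obtain rfl := Nat.le_zero.mp h; simp
  | succ n ih =>
    cases i with
    | zero => simp
    | succ i =>
      have h₁ := ih (Nat.le_of_succ_le_succ h)
      have h₂ : qChoose q n (i + 1) * qFactorial q (i + 1) * qFactorial q (n - i) =
          qFactorial q n * qNum q (n - i) := by
        rcases Nat.lt_or_ge i n with hi | hi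
        · rw [show n - i = n - (i + 1) + 1 by omega, qFactorial_succ q (n - (i + 1)), ← ih hi]
          ring
        · rw [qChoose_eq_zero_of_lt q (by omega), show n - i = 0 by omega]; simp
      have h₃ := qNum_add q (i + 1) (n - i)
      rw [show i + 1 + (n - i) = n + 1 by omega] at h₃
      rw [qChoose_succ_succ, Nat.add_sub_add_right, qFactorial_succ q n, h₃]
      linear_combination qNum q (i + 1) * h₁ + q ^ (i + 1) * h₂ +
        qChoose q n i * qFactorial q (n - i) * qFactorial_succ q i

lemma sub_one_dvd_qChoose_sub_choose (n i : ℕ) : q - 1 ∣ qChoose q n i - n.choose i := by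
  induction n generalizing i with
  | zero => cases i <;> simp [qChoose]
  | succ n ih =>
    cases i with
    | zero => simp
    | succ i =>
      convert (ih i).add (((ih (i + 1)).mul_left (q ^ (i + 1))).add
        ((sub_one_dvd_pow_sub_one q (i + 1)).mul_right (n.choose (i + 1)))) using 1
      rw [qChoose_succ_succ, Nat.choose_succ_succ]
      push_cast
      ring

lemma sq_dvd_pow_sub_one_sub {τ : R} (e : R) (hq : τ ^ 2 ∣ q - 1 - e * τ) (n : ℕ) :
    τ ^ 2 ∣ q ^ n - 1 - n * e * τ := by
  obtain ⟨h, hh⟩ := hq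
  induction n with
  | zero => simp
  | succ n ih =>
    obtain ⟨g, hg⟩ := ih
    refine ⟨q * g + h + n * e * (e + τ * h), ?_⟩
    push_cast
    linear_combination q * hg + (1 + n * e * τ) * hh

end QAnalogue

section Laurent

variable {K : Type*}

lemma T_sub_one_ne_zero [CommRing K] [Nontrivial K] {m : ℤ} (hm : m ≠ 0) :
    (T m - 1 : K[T;T⁻¹]) ≠ 0 := by
  rw [sub_ne_zero, ← T_zero]
  exact fun h => hm (AddMonoidAlgebra.single_left_injective one_ne_zero (by simpa only [T] using h))

lemma sq_dvd_T_sub_one_sub [CommRing K] (m : ℤ) :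
    (T 1 - 1 : K[T;T⁻¹]) ^ 2 ∣ (T m : K[T;T⁻¹]) - 1 - (m : K[T;T⁻¹]) * (T 1 - 1) := by
  obtain ⟨n, rfl | rfl⟩ := Int.eq_nat_or_neg m
  · simpa [T_pow] using sq_dvd_pow_sub_one_sub (τ := T 1 - 1) (T 1 : K[T;T⁻¹]) 1 (by simp) n
  · have hinv : (T (-1) * T 1 : K[T;T⁻¹]) = 1 := by rw [← T_add]; simp
    have h : (T 1 - 1 : K[T;T⁻¹]) ^ 2 ∣ T (-1) - 1 - (-1) * (T 1 - 1) :=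
      ⟨T (-1), by linear_combination (2 - T 1) * hinv⟩
    simpa [T_pow, sub_neg_eq_add] using sq_dvd_pow_sub_one_sub (T (-1)) (-1) h n

lemma T_sub_one_dvd_T_sub_one [CommRing K] (m : ℤ) : (T 1 - 1 : K[T;T⁻¹]) ∣ T m - 1 := by
  simpa using ((dvd_pow_self _ two_ne_zero).trans (sq_dvd_T_sub_one_sub m)).add
    (dvd_mul_left (T 1 - 1 : K[T;T⁻¹]) (m : K[T;T⁻¹]))

lemma qFactorial_T_ne_zero [CommRing K] [IsDomain K] {η : ℤ} (hη : η ≠ 0) (n : ℕ) :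
    qFactorial (T η : K[T;T⁻¹]) n ≠ 0 := by
  refine prod_ne_zero_iff.mpr fun k _ hk => T_sub_one_ne_zero (K := K)
    (m := (k + 1 : ℕ) * η) (mul_ne_zero (by positivity) hη) ?_
  rw [← T_pow, ← geom_sum_mul, ← qNum, hk, zero_mul]

lemma qfact_eq_qFactorial [Field K] (η : ℤ) (n : ℕ) : qfact K η n = qFactorial (T η) n := rfl

end Laurent

section SkewLeibniz

variable {R : Type*} [CommRing R] {q : R}

lemma mul_pow_eq_smul_of_mul_eq_smul {E : Type*} [Ring E] [Algebra R E] {x y : E}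
    (h : x * y = q • (y * x)) (n : ℕ) : x * y ^ n = q ^ n • (y ^ n * x) := by
  induction n with
  | zero => simp
  | succ n ih =>
    rw [pow_succ, ← mul_assoc, ih, smul_mul_assoc, mul_assoc, h, mul_smul_comm, smul_smul,
      ← mul_assoc, ← pow_succ, ← pow_succ]

lemma pow_mul_eq_smul_of_mul_eq_smul {E : Type*} [Ring E] [Algebra R E] {x y : E}
    (h : x * y = q • (y * x)) (n : ℕ) : x ^ n * y = q ^ n • (y * x ^ n) := by
  induction n with
  | zero => simp
  | succ n ih =>
    rw [pow_succ', mul_assoc, ih, mul_smul_comm, ← mul_assoc, h, smul_mul_assoc, smul_smul,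
      mul_assoc, ← pow_succ', ← pow_succ]

variable {A : Type*} [Ring A] [Algebra R A] {σ Δ : Module.End R A}

theorem pow_apply_mul (hder : ∀ a b, Δ (a * b) = σ a * Δ b + Δ a * b)
    (hcomm : Δ * σ = q • (σ * Δ)) (n : ℕ) (a b : A) :
    (Δ ^ n) (a * b) =
      ∑ i ∈ range (n + 1), qChoose q n i • ((σ ^ i) ((Δ ^ (n - i)) a) * (Δ ^ i) b) := by
  induction n with
  | zero => simp
  | succ n ih =>
    set f : ℕ → A := fun i => (σ ^ i) ((Δ ^ (n + 1 - i)) a) * (Δ ^ i) b with hf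
    set g : ℕ → A := fun i => (q ^ i * qChoose q n i) • f i with hg
    have hterm : ∀ i ∈ range (n + 1),
        Δ (qChoose q n i • ((σ ^ i) ((Δ ^ (n - i)) a) * (Δ ^ i) b)) =
          qChoose q n i • f (i + 1) + g i := by
      intro i hi
      have hi : n - i + 1 = n + 1 - i := by have := mem_range.mp hi; omega
      have hσ := congrArg (fun φ : Module.End R A => φ ((Δ ^ (n - i)) a))
        (mul_pow_eq_smul_of_mul_eq_smul (R := R) hcomm i)
      simp only [Module.End.mul_apply, LinearMap.smul_apply] at hσ
      simp only [hf, hg, ← hi, map_smul, hder, hσ, Nat.add_sub_add_right, pow_succ',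
        Module.End.mul_apply, smul_add, smul_mul_assoc, smul_smul, mul_comm (q ^ i)]
    have hg_shift : ∑ i ∈ range (n + 1), g i = ∑ i ∈ range (n + 1), g (i + 1) + f 0 := by
      rw [sum_range_succ' g, sum_range_succ (fun i => g (i + 1))]
      simp [hg, hf, qChoose_eq_zero_of_lt q (Nat.lt_succ_self n)]
    rw [pow_succ', Module.End.mul_apply, ih, map_sum, sum_congr rfl hterm, sum_add_distrib,
      hg_shift, sum_range_succ' _ (n + 1)]
    simp only [qChoose_succ_succ, add_smul, sum_add_distrib, hg, qChoose_zero_right, one_smul]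
    simp only [hf, Nat.sub_zero, pow_zero, Module.End.one_apply]
    abel

theorem pow_apply_mul_eq_smul_sum (hder : ∀ a b, Δ (a * b) = σ a * Δ b + Δ a * b)
    (hcomm : Δ * σ = q • (σ * Δ)) {τ : R} {dv : ℕ → A → A}
    (hdv : ∀ k x, (Δ ^ k) x = (τ ^ k * qFactorial q k) • dv k x) (n : ℕ) (a b : A) :
    (Δ ^ n) (a * b) =
      (τ ^ n * qFactorial q n) • ∑ i ∈ range (n + 1), (σ ^ i) (dv (n - i) a) * dv i b := by
  rw [pow_apply_mul hder hcomm, smul_sum]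
  refine sum_congr rfl fun i hi => ?_
  have hi : i ≤ n := Nat.lt_succ_iff.mp (mem_range.mp hi)
  rw [hdv, hdv, map_smul, smul_mul_smul_comm, smul_smul, ← pow_sub_mul_pow τ hi,
    ← qChoose_mul_qFactorial_mul_qFactorial q hi]
  congr 1
  ring

end SkewLeibniz

lemma sum_range_succ_comm_sub {M : Type*} [AddCommMonoid M] (f : ℕ → ℕ → M) (n : ℕ) :
    ∑ i ∈ range (n + 1), f i (n - i) = ∑ i ∈ range (n + 1), f (n - i) i := by
  rw [← Nat.sum_antidiagonal_eq_sum_range_succ f, ← Nat.sum_antidiagonal_swap,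
    ← Nat.sum_antidiagonal_eq_sum_range_succ (fun i j => f j i)]
  rfl

section SemiclassicalLimit

variable {R A S : Type*} [CommRing R] [Ring A] [Algebra R A] [CommRing S] {π : A →+* S} {τ : R}

variable (π τ) in
/-- For `τ = t - 1` and `π` the reduction at `t = 1`, this says `s = (x / (t - 1))|_{t=1}`. -/
def HasDivLimit (x : A) (s : S) : Prop := ∃ w, x = τ • w ∧ π w = s

namespace HasDivLimit

variable {x y : A} {s s' : S}

lemma of_smul (w : A) : HasDivLimit π τ (τ • w) (π w) := ⟨w, rfl, rfl⟩

lemma unique [IsDomain R] [Module.IsTorsionFree R A] (hτ : τ ≠ 0)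
    (h : HasDivLimit π τ x s) (h' : HasDivLimit π τ x s') : s = s' := by
  obtain ⟨w, rfl, rfl⟩ := h
  obtain ⟨w', hw', rfl⟩ := h'
  rw [smul_right_injective A hτ hw']

lemma add (h : HasDivLimit π τ x s) (h' : HasDivLimit π τ y s') :
    HasDivLimit π τ (x + y) (s + s') := by
  obtain ⟨w, rfl, rfl⟩ := h
  obtain ⟨w', rfl, rfl⟩ := h'
  exact ⟨w + w', (smul_add ..).symm, map_add ..⟩

lemma sub (h : HasDivLimit π τ x s) (h' : HasDivLimit π τ y s') :
    HasDivLimit π τ (x - y) (s - s') := by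
  obtain ⟨w, rfl, rfl⟩ := h
  obtain ⟨w', rfl, rfl⟩ := h'
  exact ⟨w - w', (smul_sub ..).symm, map_sub ..⟩

lemma sum {ι : Type*} {t : Finset ι} {x : ι → A} {s : ι → S}
    (h : ∀ i ∈ t, HasDivLimit π τ (x i) (s i)) :
    HasDivLimit π τ (∑ i ∈ t, x i) (∑ i ∈ t, s i) := by
  classical
  induction t using Finset.induction_on with
  | empty => exact ⟨0, by simp, by simp⟩
  | insert j t hj ih =>
    rw [sum_insert hj, sum_insert hj]
    exact (h j (mem_insert_self j t)).add (ih fun i hi => h i (mem_insert_of_mem hi))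

lemma mul_right (h : HasDivLimit π τ x s) (y : A) : HasDivLimit π τ (x * y) (s * π y) := by
  obtain ⟨w, rfl, rfl⟩ := h
  exact ⟨w * y, smul_mul_assoc .., map_mul ..⟩

end HasDivLimit

lemma map_smul_of_dvd_sub (hπτ : ∀ w, π (τ • w) = 0) {l : R} {m : ℕ}
    (hl : τ ∣ l - m) (x : A) : π (l • x) = m • π x := by
  obtain ⟨h, hh⟩ := hl
  rw [sub_eq_iff_eq_add.mp hh, add_smul, mul_smul, map_add, hπτ, zero_add,
    Nat.cast_smul_eq_nsmul, map_nsmul]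

lemma hasDivLimit_smul (hπτ : ∀ w, π (τ • w) = 0) {l : R} {m : ℤ}
    (hl : τ ^ 2 ∣ l - m * τ) (x : A) : HasDivLimit π τ (l • x) (m • π x) := by
  obtain ⟨h, hh⟩ := hl
  refine ⟨(m : R) • x + (τ * h) • x, ?_, ?_⟩
  · rw [sub_eq_iff_eq_add.mp hh, smul_add, smul_smul, smul_smul, ← add_smul]
    congr 1
    ring
  · rw [map_add, mul_smul, hπτ, add_zero, Int.cast_smul_eq_zsmul, map_zsmul]

lemma hasDivLimit_commutator (hker : ∀ a, π a = 0 → ∃ b, a = τ • b) {br : S → S → S}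
    (hbr : ∀ a b z, a * b - b * a = τ • z → br (π a) (π b) = π z) (a b : A) :
    HasDivLimit π τ (a * b - b * a) (br (π a) (π b)) := by
  obtain ⟨z, hz⟩ := hker (a * b - b * a) (by rw [map_sub, map_mul, map_mul, mul_comm, sub_self])
  exact ⟨z, hz, (hbr a b z hz).symm⟩

variable {σ : Module.End R A}

lemma map_apply_eq (hπτ : ∀ w, π (τ • w) = 0) (hσ : ∀ a, ∃ b, σ a - a = τ • b) (x : A) :
    π (σ x) = π x := by
  obtain ⟨b, hb⟩ := hσ x
  rw [← sub_eq_zero, ← map_sub, hb, hπτ]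

lemma map_pow_apply_eq (hπτ : ∀ w, π (τ • w) = 0) (hσ : ∀ a, ∃ b, σ a - a = τ • b) (i : ℕ)
    (x : A) : π ((σ ^ i) x) = π x := by
  induction i with
  | zero => rfl
  | succ i ih => rw [pow_succ', Module.End.mul_apply, map_apply_eq hπτ hσ, ih]

lemma hasDivLimit_pow_apply_sub (hπτ : ∀ w, π (τ • w) = 0) {α : S → S}
    (hσα : ∀ a, HasDivLimit π τ (σ a - a) (α (π a))) (i : ℕ) (x : A) :
    HasDivLimit π τ ((σ ^ i) x - x) (i • α (π x)) := by
  induction i with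
  | zero => exact ⟨0, by simp, by simp⟩
  | succ i ih =>
    have hσ : ∀ a, ∃ b, σ a - a = τ • b := fun a => (hσα a).imp fun _ h => h.1
    obtain ⟨w, hw, hwπ⟩ := ih
    have hσw : HasDivLimit π τ (σ ((σ ^ i) x - x)) (i • α (π x)) :=
      ⟨σ w, by rw [hw, map_smul], by rw [map_apply_eq hπτ hσ, hwπ]⟩
    convert hσw.add (hσα x) using 1
    · rw [pow_succ', Module.End.mul_apply, map_sub]
      abel
    · rw [succ_nsmul]

lemma hasDivLimit_pow_apply_mul_sub (hπτ : ∀ w, π (τ • w) = 0) {α : S → S}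
    (hσα : ∀ a, HasDivLimit π τ (σ a - a) (α (π a))) {br : S → S → S}
    (hbr : ∀ a b, HasDivLimit π τ (a * b - b * a) (br (π a) (π b))) (i j : ℕ) (x y : A) :
    HasDivLimit π τ ((σ ^ i) x * y - (σ ^ j) y * x)
      (br (π x) (π y) + i • (α (π x) * π y) - j • (α (π y) * π x)) := by
  have h := (((hasDivLimit_pow_apply_sub hπτ hσα i x).mul_right y).add (hbr x y)).sub
    ((hasDivLimit_pow_apply_sub hπτ hσα j y).mul_right x)
  simp only [smul_mul_assoc] at h
  convert h using 1 <;> [noncomm_ring; abel]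

end SemiclassicalLimit

section HigherDerivation

variable {R A S : Type*} [CommRing R] [Ring A] [Algebra R A] [CommRing S]
  {π : A →+* S} {τ q : R} {Δ σ : Module.End R A}

lemma exists_descent_of_dvd [IsDomain R] [Module.IsTorsionFree R A]
    (hker : ∀ a, π a = 0 ↔ ∃ b, a = τ • b) (f : Module.End R A) {c : R} (hc : c ≠ 0)
    (hdiv : ∀ a, ∃ b, f a = c • b) : ∃ g : S → S, ∀ a b, f a = c • b → g (π a) = π b := by
  choose d hd using hdiv
  have hfac : (fun a => π (d a)).FactorsThrough π := by
    intro a a' h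
    obtain ⟨z, hz⟩ := (hker (a - a')).1 (by rw [map_sub, h, sub_self])
    have hdz : d a - d a' = τ • d z := smul_right_injective A hc <| by
      simp only
      rw [smul_sub, ← hd, ← hd, ← map_sub, hz, map_smul, hd, smul_comm]
    rw [← sub_eq_zero, ← map_sub, hdz, (hker _).2 ⟨_, rfl⟩]
  refine ⟨Function.extend π (fun a => π (d a)) id, fun a b hab => ?_⟩
  rw [hfac.extend_apply, smul_right_injective A hc ((hd a).symm.trans hab)]

variable (π τ q Δ) in
/-- `D k (ā) = (Δᵏ a / (τᵏ (k)!_q))|_{τ=0}`, the paper's definition of the maps `Dₖ`. -/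
def IsDividedPowerLimit (D : ℕ → S → S) : Prop :=
  ∀ k a b, (Δ ^ k) a = (τ ^ k * qFactorial q k) • b → D k (π a) = π b

lemma exists_isDividedPowerLimit [IsDomain R] [Module.IsTorsionFree R A]
    (hker : ∀ a, π a = 0 ↔ ∃ b, a = τ • b) (hτ : τ ≠ 0) (hqf : ∀ k, qFactorial q k ≠ 0)
    (hdiv : ∀ k a, ∃ b, (Δ ^ k) a = (τ ^ k * qFactorial q k) • b) :
    ∃ D, IsDividedPowerLimit π τ q Δ D := by
  choose D hD using fun k =>
    exists_descent_of_dvd hker (Δ ^ k) (mul_ne_zero (pow_ne_zero k hτ) (hqf k)) (hdiv k)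
  exact ⟨D, hD⟩

namespace IsDividedPowerLimit

variable {D : ℕ → S → S}

theorem map_add (hD : IsDividedPowerLimit π τ q Δ D)
    (hdiv : ∀ k a, ∃ b, (Δ ^ k) a = (τ ^ k * qFactorial q k) • b) (k : ℕ) (a b : A) :
    D k (π a + π b) = D k (π a) + D k (π b) := by
  choose dv hdv using hdiv
  rw [← _root_.map_add, hD k _ (dv k a + dv k b) (by rw [_root_.map_add, hdv, hdv, smul_add]),
    _root_.map_add, hD k a _ (hdv k a), hD k b _ (hdv k b)]

theorem map_mul (hD : IsDividedPowerLimit π τ q Δ D)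
    (hdiv : ∀ k a, ∃ b, (Δ ^ k) a = (τ ^ k * qFactorial q k) • b)
    (hπτ : ∀ w, π (τ • w) = 0) (hσ : ∀ a, ∃ b, σ a - a = τ • b)
    (hder : ∀ a b, Δ (a * b) = σ a * Δ b + Δ a * b) (hcomm : Δ * σ = q • (σ * Δ))
    (n : ℕ) (a b : A) :
    D n (π a * π b) = ∑ i ∈ range (n + 1), D i (π a) * D (n - i) (π b) := by
  choose dv hdv using hdiv
  rw [← _root_.map_mul, hD n _ _ (pow_apply_mul_eq_smul_sum hder hcomm hdv n a b), map_sum,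
    ← sum_range_succ_comm_sub (fun i j => π ((σ ^ j) (dv i a) * dv j b))]
  refine sum_congr rfl fun i _ => ?_
  rw [_root_.map_mul, map_pow_apply_eq hπτ hσ, hD i a _ (hdv i a), hD (n - i) b _ (hdv _ b)]

theorem eq_of_hasDivLimit [IsDomain R] [Module.IsTorsionFree R A]
    (hD : IsDividedPowerLimit π τ q Δ D) (hτ : τ ≠ 0) (hqf : ∀ k, qFactorial q k ≠ 0)
    {k : ℕ} {z d T : A} {s : S} (hd : (Δ ^ k) z = (τ ^ k * qFactorial q k) • d)
    (hT : (Δ ^ k) (τ • z) = (τ ^ k * qFactorial q k) • T) (hs : HasDivLimit π τ T s) :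
    D k (π z) = s := by
  have hTd : T = τ • d := smul_right_injective A (mul_ne_zero (pow_ne_zero k hτ) (hqf k)) <| by
    simp only
    rw [← hT, map_smul, hd, smul_comm]
  rw [hD k z d hd]
  exact (HasDivLimit.of_smul d).unique hτ (hTd ▸ hs)

theorem map_bracket [IsDomain R] [Module.IsTorsionFree R A]
    (hD : IsDividedPowerLimit π τ q Δ D) (hτ : τ ≠ 0) (hqf : ∀ k, qFactorial q k ≠ 0)
    (hdiv : ∀ k a, ∃ b, (Δ ^ k) a = (τ ^ k * qFactorial q k) • b)
    (hπτ : ∀ w, π (τ • w) = 0) {α : S → S} (hσα : ∀ a, HasDivLimit π τ (σ a - a) (α (π a)))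
    (hder : ∀ a b, Δ (a * b) = σ a * Δ b + Δ a * b) (hcomm : Δ * σ = q • (σ * Δ))
    {br : S → S → S} (hbr : ∀ a b, HasDivLimit π τ (a * b - b * a) (br (π a) (π b)))
    (n : ℕ) (a b : A) :
    D n (br (π a) (π b)) = ∑ i ∈ range (n + 1),
      (br (D i (π a)) (D (n - i) (π b))
        + i • (α (D (n - i) (π a)) * D i (π b) - D i (π a) * α (D (n - i) (π b)))) := by
  choose dv hdv using hdiv
  obtain ⟨z, hz, hzπ⟩ := hbr a b
  rw [← hzπ]
  -- reindexing the Leibniz sum of `Δⁿ(ba)` by `i ↦ n - i` pairs it termwise with that of `Δⁿ(ab)`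
  refine hD.eq_of_hasDivLimit hτ hqf (hdv n z) (T := ∑ i ∈ range (n + 1),
    ((σ ^ i) (dv (n - i) a) * dv i b - (σ ^ (n - i)) (dv i b) * dv (n - i) a)) ?_ ?_
  · rw [← hz, map_sub, pow_apply_mul_eq_smul_sum hder hcomm hdv,
      pow_apply_mul_eq_smul_sum hder hcomm hdv, ← smul_sub, sum_sub_distrib,
      ← sum_range_succ_comm_sub (fun i j => (σ ^ j) (dv i b) * dv j a)]
  · convert HasDivLimit.sum fun i _ =>
      hasDivLimit_pow_apply_mul_sub hπτ hσα hbr i (n - i) (dv (n - i) a) (dv i b) using 1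
    have hD' : ∀ k x, D k (π x) = π (dv k x) := fun k x => hD k x _ (hdv k x)
    simp only [hD', sum_add_distrib, sum_sub_distrib, smul_sub]
    rw [sum_range_succ_comm_sub (fun i j => br (π (dv i a)) (π (dv j b))),
      sum_range_succ_comm_sub (fun i j => j • (α (π (dv i b)) * π (dv j a)))]
    simp only [mul_comm (π (dv _ a))]
    abel

theorem map_alpha [IsDomain R] [Module.IsTorsionFree R A]
    (hD : IsDividedPowerLimit π τ q Δ D) (hτ : τ ≠ 0) (hqf : ∀ k, qFactorial q k ≠ 0)
    (hdiv : ∀ k a, ∃ b, (Δ ^ k) a = (τ ^ k * qFactorial q k) • b)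
    (hπτ : ∀ w, π (τ • w) = 0) {α : S → S} (hσα : ∀ a, HasDivLimit π τ (σ a - a) (α (π a)))
    (hcomm : Δ * σ = q • (σ * Δ))
    {η : ℤ} (hq : τ ^ 2 ∣ q - 1 - η * τ) (i : ℕ) (a : A) :
    D i (α (π a)) = α (D i (π a)) + (i * η : ℤ) • D i (π a) := by
  choose dv hdv using hdiv
  have hσ : ∀ a, ∃ b, σ a - a = τ • b := fun a => (hσα a).imp fun _ h => h.1
  obtain ⟨g, hg, hgπ⟩ := hσα a
  rw [← hgπ, hD i a _ (hdv i a)]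
  refine hD.eq_of_hasDivLimit hτ hqf (hdv i g) (T := q ^ i • σ (dv i a) - dv i a) ?_ ?_
  · have hcomm_i := congrArg (fun φ : Module.End R A => φ a)
      (pow_mul_eq_smul_of_mul_eq_smul (R := R) hcomm i)
    simp only [Module.End.mul_apply, LinearMap.smul_apply] at hcomm_i
    rw [← hg, map_sub, hcomm_i, hdv, map_smul, smul_comm, ← smul_sub]
  · have hqi : τ ^ 2 ∣ q ^ i - 1 - ((i * η : ℤ) : R) * τ := by
      push_cast
      exact sq_dvd_pow_sub_one_sub q η hq i
    convert (hσα (dv i a)).add (hasDivLimit_smul hπτ hqi (σ (dv i a))) using 1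
    · rw [sub_smul, one_smul]
      abel
    · rw [map_apply_eq hπτ hσ]

theorem comp [IsDomain R] [Module.IsTorsionFree R A]
    (hD : IsDividedPowerLimit π τ q Δ D) (hτ : τ ≠ 0) (hqf : ∀ k, qFactorial q k ≠ 0)
    (hdiv : ∀ k a, ∃ b, (Δ ^ k) a = (τ ^ k * qFactorial q k) • b)
    (hπτ : ∀ w, π (τ • w) = 0) (hq : τ ∣ q - 1) (i j : ℕ) (a : A) :
    D i (D j (π a)) = (i + j).choose i • D (i + j) (π a) := by
  choose dv hdv using hdiv
  have h : (Δ ^ i) (dv j a) =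
      (τ ^ i * qFactorial q i) • (qChoose q (i + j) i • dv (i + j) a) := by
    refine smul_right_injective A (mul_ne_zero (pow_ne_zero j hτ) (hqf j)) ?_
    simp only
    rw [← map_smul, ← hdv, ← Module.End.mul_apply, ← pow_add, hdv, smul_smul, smul_smul,
      ← qChoose_mul_qFactorial_mul_qFactorial q (Nat.le_add_right i j),
      Nat.add_sub_cancel_left, pow_add]
    congr 1
    ring
  rw [hD j a _ (hdv j a), hD i _ _ h,
    map_smul_of_dvd_sub hπτ (hq.trans (sub_one_dvd_qChoose_sub_choose q _ _)),
    hD (i + j) a _ (hdv _ a)]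

end IsDividedPowerLimit

end HigherDerivation

theorem stmt18_general {K A SA : Type*} [Field K] [Ring A]
    [Algebra (LaurentPolynomial K) A] [CommRing SA] [Algebra K SA]
    (htf : ∀ (l : LaurentPolynomial K) (a : A), l • a = 0 → l = 0 ∨ a = 0)
    (σ : A ≃+* A) (hσl : ∀ (l : LaurentPolynomial K) (a : A), σ (l • a) = l • σ a)
    (Δ : A → A) (hΔadd : ∀ a b : A, Δ (a + b) = Δ a + Δ b)
    (hΔl : ∀ (l : LaurentPolynomial K) (a : A), Δ (l • a) = l • Δ a)
    (hΔder : ∀ a b : A, Δ (a * b) = σ a * Δ b + Δ a * b)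
    -- the quotient `Ā = A/(t−1)A`, which is commutative
    (π : A →+* SA)
    (hker : ∀ a : A, π a = 0 ↔ ∃ b : A, a = (T 1 - 1 : LaurentPolynomial K) • b)
    -- the semiclassical limit Poisson bracket on `Ā`
    (Q : PoissonStructure K SA)
    (hQ : ∀ a b z : A, a * b - b * a = (T 1 - 1 : LaurentPolynomial K) • z →
      Q.br (π a) (π b) = π z)
    -- `σ − id` is divisible by `t − 1`, and `α = ((σ−id)/(t−1))|_{t=1}`
    (hσdiv : ∀ a : A, ∃ b : A, σ a - a = (T 1 - 1 : LaurentPolynomial K) • b)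
    (α : SA → SA)
    (hα : ∀ a b : A, σ a - a = (T 1 - 1 : LaurentPolynomial K) • b → α (π a) = π b)
    -- `Δσ = t^η σΔ` with the image of `η` nonzero in `K`
    (η : ℤ) (hη : ((η : ℤ) : K) ≠ 0)
    (hcomm : ∀ a : A, Δ (σ a) = (T η : LaurentPolynomial K) • σ (Δ a))
    -- `Δⁱ(A) ⊆ (t−1)ⁱ (i)!_{t^η} A`
    (hdiv : ∀ (i : ℕ) (a : A), ∃ b : A,
      Δ^[i] a = (((T 1 - 1 : LaurentPolynomial K) ^ i) * qfact K η i) • b) :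
    ∃ D : ℕ → SA → SA,
      -- `Dᵢ(ā) = (Δⁱ(a)/((t−1)ⁱ (i)!_{t^η}))|_{t=1}`:
      (∀ (i : ℕ) (a b : A),
        Δ^[i] a = (((T 1 - 1 : LaurentPolynomial K) ^ i) * qfact K η i) • b →
          D i (π a) = π b) ∧
      -- `(Dᵢ)` is a higher derivation on `Ā`:
      (∀ a : A, D 0 (π a) = π a) ∧
      (∀ (i : ℕ) (a b : A), D i (π a + π b) = D i (π a) + D i (π b)) ∧
      (∀ (n : ℕ) (a b : A),
        D n (π a * π b) = ∑ i ∈ Finset.range (n + 1), D i (π a) * D (n - i) (π b)) ∧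
      -- extending `δ = (Δ/(t−1))|_{t=1}`:
      (∀ a b : A, Δ a = (T 1 - 1 : LaurentPolynomial K) • b → D 1 (π a) = π b) ∧
      -- `(Dᵢ)` is higher `α`-skew Poisson (Axiom (A2)):
      (∀ (n : ℕ) (a b : A),
        D n (Q.br (π a) (π b)) = ∑ i ∈ Finset.range (n + 1),
          (Q.br (D i (π a)) (D (n - i) (π b))
            + i • (α (D (n - i) (π a)) * D i (π b)
              - D i (π a) * α (D (n - i) (π b))))) ∧
      -- Axiom (A3) for `(η, α)`:
      (∀ (i : ℕ) (a : A),
        D i (α (π a)) = α (D i (π a)) + (i • ((η : ℤ) : K)) • D i (π a)) ∧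
      -- `(Dᵢ)` is iterative:
      (∀ (i j : ℕ) (a : A), D i (D j (π a)) = ((i + j).choose i) • D (i + j) (π a)) ∧
      -- local nilpotence is inherited from `Δ`:
      ((∀ a : A, ∃ N : ℕ, ∀ i ≥ N, Δ^[i] a = 0) →
        ∀ a : A, ∃ N : ℕ, ∀ i ≥ N, D i (π a) = 0) := by
  have : NoZeroSMulDivisors (LaurentPolynomial K) A := ⟨htf _ _⟩
  let ΔL : Module.End (LaurentPolynomial K) A :=
    { toFun := Δ, map_add' := hΔadd, map_smul' := hΔl }
  let σL : Module.End (LaurentPolynomial K) A :=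
    { toFun := σ, map_add' := map_add σ, map_smul' := hσl }
  have hpow : ∀ i, ⇑(ΔL ^ i) = Δ^[i] := Module.End.coe_pow ΔL
  have hcomm' : ΔL * σL = (T η : LaurentPolynomial K) • (σL * ΔL) := LinearMap.ext hcomm
  have hτ : (T 1 - 1 : LaurentPolynomial K) ≠ 0 := T_sub_one_ne_zero one_ne_zero
  have hqf := qFactorial_T_ne_zero (K := K) (η := η) (by rintro rfl; simp at hη)
  have hπτ : ∀ w, π ((T 1 - 1 : LaurentPolynomial K) • w) = 0 := fun w => (hker _).2 ⟨w, rfl⟩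
  have hσα : ∀ a, HasDivLimit π (T 1 - 1 : LaurentPolynomial K) (σL a - a) (α (π a)) :=
    fun a => (hσdiv a).imp fun b hb => ⟨hb, (hα a b hb).symm⟩
  have hbr := hasDivLimit_commutator (fun a => (hker a).1) hQ
  simp only [← hpow, qfact_eq_qFactorial] at hdiv ⊢
  obtain ⟨D, hD⟩ := exists_isDividedPowerLimit hker hτ hqf hdiv
  refine ⟨D, hD, fun a => hD 0 a a (by simp), hD.map_add hdiv,
    hD.map_mul hdiv hπτ hσdiv hΔder hcomm', fun a b hb => hD 1 a b (by simpa [ΔL] using hb),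
    hD.map_bracket hτ hqf hdiv hπτ hσα hΔder hcomm' hbr, fun i a => ?_,
    hD.comp hτ hqf hdiv hπτ (T_sub_one_dvd_T_sub_one η), fun hnil a => ?_⟩
  · rw [hD.map_alpha hτ hqf hdiv hπτ hσα hcomm' (sq_dvd_T_sub_one_sub η) i a,
      ← Int.cast_smul_eq_zsmul K]
    push_cast
    rw [nsmul_eq_mul]
  · obtain ⟨N, hN⟩ := hnil a
    exact ⟨N, fun i hi => by simpa using hD i a 0 (by simp [hN i hi])⟩

/-- Semiclassical limit higher derivations: if `Δσ = t^η σΔ` and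
`Δⁱ(A) ⊆ (t−1)ⁱ (i)!_{t^η} A` for all `i`, then the maps
`Dᵢ(ā) = (Δⁱ(a)/((t−1)ⁱ(i)!_{t^η}))|_{t=1}` form an iterative higher `(η,α)`-skew
Poisson derivation on `Ā = A/(t−1)A` extending `δ = (Δ/(t−1))|_{t=1}`, locally
nilpotent if `Δ` is. -/
theorem stmt18 {K A SA : Type*} [Field K] [Ring A]
    [Algebra (LaurentPolynomial K) A] [CommRing SA] [Algebra K SA]
    (htf : ∀ (l : LaurentPolynomial K) (a : A), l • a = 0 → l = 0 ∨ a = 0)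
    (σ : A ≃+* A) (hσl : ∀ (l : LaurentPolynomial K) (a : A), σ (l • a) = l • σ a)
    (Δ : A → A) (hΔadd : ∀ a b : A, Δ (a + b) = Δ a + Δ b)
    (hΔl : ∀ (l : LaurentPolynomial K) (a : A), Δ (l • a) = l • Δ a)
    (hΔder : ∀ a b : A, Δ (a * b) = σ a * Δ b + Δ a * b)
    -- the quotient `Ā = A/(t−1)A`, which is commutative
    (π : A →+* SA) (hsurj : Function.Surjective π)
    (hker : ∀ a : A, π a = 0 ↔ ∃ b : A, a = (T 1 - 1 : LaurentPolynomial K) • b)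
    -- the semiclassical limit Poisson bracket on `Ā`
    (Q : PoissonStructure K SA)
    (hQ : ∀ a b z : A, a * b - b * a = (T 1 - 1 : LaurentPolynomial K) • z →
      Q.br (π a) (π b) = π z)
    -- `σ − id` is divisible by `t − 1`, and `α = ((σ−id)/(t−1))|_{t=1}`
    (hσdiv : ∀ a : A, ∃ b : A, σ a - a = (T 1 - 1 : LaurentPolynomial K) • b)
    (α : SA → SA)
    (hα : ∀ a b : A, σ a - a = (T 1 - 1 : LaurentPolynomial K) • b → α (π a) = π b)
    -- `Δσ = t^η σΔ` with the image of `η` nonzero in `K`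
    (η : ℤ) (hη : ((η : ℤ) : K) ≠ 0)
    (hcomm : ∀ a : A, Δ (σ a) = (T η : LaurentPolynomial K) • σ (Δ a))
    -- `Δⁱ(A) ⊆ (t−1)ⁱ (i)!_{t^η} A`
    (hdiv : ∀ (i : ℕ) (a : A), ∃ b : A,
      Δ^[i] a = (((T 1 - 1 : LaurentPolynomial K) ^ i) * qfact K η i) • b) :
    ∃ D : ℕ → SA → SA,
      -- `Dᵢ(ā) = (Δⁱ(a)/((t−1)ⁱ (i)!_{t^η}))|_{t=1}`:
      (∀ (i : ℕ) (a b : A),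
        Δ^[i] a = (((T 1 - 1 : LaurentPolynomial K) ^ i) * qfact K η i) • b →
          D i (π a) = π b) ∧
      -- `(Dᵢ)` is a higher derivation on `Ā`:
      (∀ a : A, D 0 (π a) = π a) ∧
      (∀ (i : ℕ) (a b : A), D i (π a + π b) = D i (π a) + D i (π b)) ∧
      (∀ (n : ℕ) (a b : A),
        D n (π a * π b) = ∑ i ∈ Finset.range (n + 1), D i (π a) * D (n - i) (π b)) ∧
      -- extending `δ = (Δ/(t−1))|_{t=1}`:
      (∀ a b : A, Δ a = (T 1 - 1 : LaurentPolynomial K) • b → D 1 (π a) = π b) ∧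
      -- `(Dᵢ)` is higher `α`-skew Poisson (Axiom (A2)):
      (∀ (n : ℕ) (a b : A),
        D n (Q.br (π a) (π b)) = ∑ i ∈ Finset.range (n + 1),
          (Q.br (D i (π a)) (D (n - i) (π b))
            + i • (α (D (n - i) (π a)) * D i (π b)
              - D i (π a) * α (D (n - i) (π b))))) ∧
      -- Axiom (A3) for `(η, α)`:
      (∀ (i : ℕ) (a : A),
        D i (α (π a)) = α (D i (π a)) + (i • ((η : ℤ) : K)) • D i (π a)) ∧
      -- `(Dᵢ)` is iterative:
      (∀ (i j : ℕ) (a : A), D i (D j (π a)) = ((i + j).choose i) • D (i + j) (π a)) ∧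
      -- local nilpotence is inherited from `Δ`:
      ((∀ a : A, ∃ N : ℕ, ∀ i ≥ N, Δ^[i] a = 0) →
        ∀ a : A, ∃ N : ℕ, ∀ i ≥ N, D i (π a) = 0) :=
  stmt18_general htf σ hσl Δ hΔadd hΔl hΔder π hker Q hQ hσdiv α hα η hη hcomm hdiv
end
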